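/- In the free associative conformal algebra C(B, N), for any normal words [u], [v] (u, v ∈ T) and any n ∈ ℤ_{≥0}, the leading word of [u]_{(n)}[v] is at most u^{\D} ♮ v, where u^{\D} is u with its final D-exponent removed and u^{\D} ♮ v denotes the normal word obtained by concatenating u^{\D} and v with all connecting indices equal to N − 1. -/

import Mathlib

/-!  Basic definitions for (associative) conformal algebras, the free
associative conformal algebra `C(B,N)`, normal words, the weight ordering,
normal `S`-words, compositions and Gröbner–Shirshov bases, following
Ni–Chen, "A new Composition-Diamond lemma for associative conformal algebras". -/

universe u v w

open scoped BigOperators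

/-- A conformal algebra over a field `K`. -/
structure ConformalAlgebra (K : Type u) [Field K] (C : Type w)
    [AddCommGroup C] [Module K C] where
  mul : ℕ → C →ₗ[K] C →ₗ[K] C
  D : C →ₗ[K] C
  locality : ∀ a b : C, ∃ N : ℕ, ∀ n : ℕ, N ≤ n → mul n a b = 0
  leibniz : ∀ (n : ℕ) (a b : C), D (mul n a b) = mul n (D a) b + mul n a (D b)
  D_mul : ∀ (n : ℕ) (a b : C), 0 < n → mul n (D a) b = -((n : K) • mul (n - 1) a b)
  D_mul_zero : ∀ a b : C, mul 0 (D a) b = 0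

/-- An associative conformal algebra. -/
structure AssocConformalAlgebra (K : Type u) [Field K] (C : Type w)
    [AddCommGroup C] [Module K C] extends ConformalAlgebra K C where
  assoc : ∀ (n m : ℕ) (a b c : C),
    mul m (mul n a b) c =
      ∑ t ∈ Finset.range (n + 1),
        ((-1 : K) ^ t * (n.choose t : K)) • mul (n - t) a (mul (m + t) b c)

variable {K : Type u} [Field K] {C : Type w} [AddCommGroup C] [Module K C]

/-- The conjugate sum `{y_(n) x} = Σ_{m≥0} (-1)^{n+m} (1/m!) D^m (f (n+m) y x)`;
a finite sum by locality. -/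
noncomputable def conjOp (D : C →ₗ[K] C) (f : ℕ → C → C → C) (n : ℕ) (y x : C) : C :=
  ∑ᶠ m : ℕ, ((-1 : K) ^ (n + m) * ((m.factorial : K))⁻¹) • (D ^ m) (f (n + m) y x)

/-- The conformal commutator `x_[n] y = x_(n) y − {y_(n) x}`. -/
noncomputable def cBracket (A : AssocConformalAlgebra K C) (n : ℕ) (x y : C) : C :=
  A.mul n x y - conjOp A.D (fun m u v => A.mul m u v) n y x

/-- An associative normal word `b₁_(n₁) ⋯ b_k_(n_k) D^i b_{k+1}`. -/
structure NormalWord (B : Type v) (N : ℕ) where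
  body : List (B × Fin N)
  last : B
  exp : ℕ

namespace NormalWord

variable {B : Type v} {N : ℕ}

/-- `u D^i` : raise the final `D`-exponent by `i`. -/
def shiftD (u : NormalWord B N) (i : ℕ) : NormalWord B N := ⟨u.body, u.last, u.exp + i⟩

/-- Concatenation `a_(n) u` of a `D`-free word `a` with `u`. -/
def concat (u : NormalWord B N) (n : Fin N) (v : NormalWord B N) : NormalWord B N :=
  ⟨u.body ++ (u.last, n) :: v.body, v.last, v.exp⟩

/-- `u^{\D} ♮ v` : drop the final `D`-exponent of `u` and concatenate with `v`,
all junction indices being `N − 1`. -/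
def natMul (u v : NormalWord B N) (hN : 0 < N) : NormalWord B N :=
  ⟨u.body ++ (u.last, ⟨N - 1, Nat.sub_lt hN one_pos⟩) ::
      v.body.map (fun p => (p.1, (⟨N - 1, Nat.sub_lt hN one_pos⟩ : Fin N))),
    v.last, v.exp⟩

end NormalWord

/-- The strict weight ordering on associative normal words: compare lengths,
then the body lexicographically, then the last letter, then the `D`-exponent. -/
def wtLT {B : Type v} {N : ℕ} (r : B → B → Prop) (u v : NormalWord B N) : Prop :=
  u.body.length < v.body.length ∨
    (u.body.length = v.body.length ∧
      (List.Lex (Prod.Lex r (· < ·)) u.body v.body ∨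
        (u.body = v.body ∧ (r u.last v.last ∨ (u.last = v.last ∧ u.exp < v.exp)))))

def wtLE {B : Type v} {N : ℕ} (r : B → B → Prop) (u v : NormalWord B N) : Prop :=
  wtLT r u v ∨ u = v

/-- Words on the alphabet `D^ω(B) = {D^i b}`. -/
inductive CWord (B : Type v) : Type v
  | gen : B → ℕ → CWord B
  | mul : ℕ → CWord B → CWord B → CWord B

/-- Length of a word. -/
def CWord.length {B : Type v} : CWord B → ℕ
  | .gen _ _ => 1
  | .mul _ u v => u.length + v.length

/-- The free associative conformal algebra `C(B,N)` generated by `B` with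
uniformly bounded locality `N`, axiomatized by its universal property. -/
structure FreeAssocConformal (K : Type u) [Field K] (B : Type v) (N : ℕ)
    (C : Type w) [AddCommGroup C] [Module K C] where
  alg : AssocConformalAlgebra K C
  ι : B → C
  loc : ∀ (b b' : B) (n : ℕ), N ≤ n → alg.mul n (ι b) (ι b') = 0
  universal : ∀ (C' : Type w) [AddCommGroup C'] [Module K C']
      (A' : AssocConformalAlgebra K C') (ε : B → C'),
      (∀ (b b' : B) (n : ℕ), N ≤ n → A'.mul n (ε b) (ε b') = 0) →
      ∃! φ : C →ₗ[K] C', (∀ b, φ (ι b) = ε b) ∧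
        (∀ (n : ℕ) (x y : C), φ (alg.mul n x y) = A'.mul n (φ x) (φ y)) ∧
        (∀ x : C, φ (alg.D x) = A'.D (φ x))

variable {B : Type v} {N : ℕ}

/-- Evaluate a `D`-free prefix (a list of letters with indices) applied to `x`,
right-normed. -/
def evalAux (F : FreeAssocConformal K B N C) : List (B × Fin N) → C → C
  | [], x => x
  | p :: rest, x => F.alg.mul (p.2 : ℕ) (F.ι p.1) (evalAux F rest x)

/-- The element of `C(B,N)` given by a normal word (right-normed bracketing). -/
def evalWord (F : FreeAssocConformal K B N C) (u : NormalWord B N) : C :=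
  evalAux F u.body ((F.alg.D ^ u.exp) (F.ι u.last))

/-- Evaluate an arbitrary word on `D^ω(B)` in `C(B,N)`. -/
def evalCWord (F : FreeAssocConformal K B N C) : CWord B → C
  | .gen b i => (F.alg.D ^ i) (F.ι b)
  | .mul n u v => F.alg.mul n (evalCWord F u) (evalCWord F v)

/-- `w` is the leading word `\bar f` of `f` with respect to the normal-word
basis `bas` and the weight ordering induced by `r`. -/
def IsLead (bas : Module.Basis (NormalWord B N) K C) (r : B → B → Prop)
    (f : C) (w : NormalWord B N) : Prop :=
  bas.repr f w ≠ 0 ∧ ∀ w', bas.repr f w' ≠ 0 → w' = w ∨ wtLT r w' w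

/-- A set of polynomials is monic if each has leading coefficient `1`. -/
def MonicSet (bas : Module.Basis (NormalWord B N) K C) (r : B → B → Prop) (S : Set C) : Prop :=
  ∀ s ∈ S, ∃ w, IsLead bas r s w ∧ bas.repr s w = 1

/-- Normal `S`-words together with their (formal) leading words:
either `[a_(n) s_(m) c]` with `a, \bar s` `D`-free, or `[a_(n) D^i s]`
with `a` `D`-free; the prefix `a_(n)` is encoded by the list `p`
(empty list = empty `a`). -/
inductive IsNSWord (F : FreeAssocConformal K B N C)
    (bas : Module.Basis (NormalWord B N) K C) (r : B → B → Prop) (S : Set C) :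
    C → NormalWord B N → Prop
  | first (p : List (B × Fin N)) (s : C) (hs : s ∈ S) (sw : NormalWord B N)
      (hlead : IsLead bas r s sw) (hfree : sw.exp = 0) (m : Fin N) (c : NormalWord B N) :
      IsNSWord F bas r S (evalAux F p (F.alg.mul (m : ℕ) s (evalWord F c)))
        ⟨p ++ sw.body ++ (sw.last, m) :: c.body, c.last, c.exp⟩
  | second (p : List (B × Fin N)) (s : C) (hs : s ∈ S) (sw : NormalWord B N)
      (hlead : IsLead bas r s sw) (i : ℕ) :
      IsNSWord F bas r S (evalAux F p ((F.alg.D ^ i) s)) ⟨p ++ sw.body, sw.last, sw.exp + i⟩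

/-- `h` can be written as a linear combination of normal `S`-words whose
(formal leading) words all satisfy `P`. -/
def SRep (F : FreeAssocConformal K B N C) (bas : Module.Basis (NormalWord B N) K C)
    (r : B → B → Prop) (S : Set C) (h : C) (P : NormalWord B N → Prop) : Prop :=
  ∃ (n : ℕ) (α : Fin n → K) (g : Fin n → C) (wd : Fin n → NormalWord B N),
    h = ∑ i, α i • g i ∧ ∀ i, IsNSWord F bas r S (g i) (wd i) ∧ P (wd i)

/-- `h` is trivial modulo `S`: a linear combination of normal `S`-words with
leading words `≤ \bar h`. -/
def TrivialMod (F : FreeAssocConformal K B N C) (bas : Module.Basis (NormalWord B N) K C)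
    (r : B → B → Prop) (S : Set C) (h : C) : Prop :=
  SRep F bas r S h (fun wd => ∀ hw, IsLead bas r h hw → wtLE r wd hw)

/-- `f` is not `D`-free: some monomial has positive `D`-exponent. -/
def NotDFree (bas : Module.Basis (NormalWord B N) K C) (f : C) : Prop :=
  ∃ w, bas.repr f w ≠ 0 ∧ w.exp ≠ 0

/-- All left multiplication compositions `b_(n) s`, `n ≥ N`, are trivial. -/
def LeftMultClosed (F : FreeAssocConformal K B N C) (bas : Module.Basis (NormalWord B N) K C)
    (r : B → B → Prop) (S : Set C) : Prop :=
  ∀ s ∈ S, ∀ (b : B) (n : ℕ), N ≤ n → TrivialMod F bas r S (F.alg.mul n (F.ι b) s)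

/-- All right multiplication compositions `s_(n) b` (for `\bar s` not `D`-free
and `n < N`, or `s` not `D`-free and `n ≥ N`) are trivial. -/
def RightMultClosed (F : FreeAssocConformal K B N C) (bas : Module.Basis (NormalWord B N) K C)
    (r : B → B → Prop) (S : Set C) : Prop :=
  ∀ s ∈ S, ∀ (b : B) (n : ℕ),
    ((∃ sw, IsLead bas r s sw ∧ sw.exp ≠ 0) ∧ n < N) ∨ (NotDFree bas s ∧ N ≤ n) →
    TrivialMod F bas r S (F.alg.mul n s (F.ι b))

/-- `S` is a Gröbner–Shirshov basis in `C(B,N)`: `S` is monic and all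
compositions (inclusion, right inclusion, intersection, right intersection,
left and right multiplication) are trivial modulo `S`. -/
def IsGSBasis (F : FreeAssocConformal K B N C) (bas : Module.Basis (NormalWord B N) K C)
    (r : B → B → Prop) (S : Set C) : Prop :=
  MonicSet bas r S ∧
  -- inclusion: \bar f = a_(n) \bar g_(m) c
  (∀ f ∈ S, ∀ g ∈ S, ∀ fw gw : NormalWord B N,
    IsLead bas r f fw → IsLead bas r g gw → gw.exp = 0 →
    ∀ (p : List (B × Fin N)) (m : Fin N) (c : NormalWord B N),
      fw = ⟨p ++ sw₁ p gw m c, c.last, c.exp⟩ →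
      TrivialMod F bas r S (f - evalAux F p (F.alg.mul (m : ℕ) g (evalWord F c)))) ∧
  -- right inclusion: \bar f = a_(n) \bar g D^i
  (∀ f ∈ S, ∀ g ∈ S, ∀ fw gw : NormalWord B N,
    IsLead bas r f fw → IsLead bas r g gw →
    ∀ (p : List (B × Fin N)) (i : ℕ),
      fw = ⟨p ++ gw.body, gw.last, gw.exp + i⟩ →
      TrivialMod F bas r S (f - evalAux F p ((F.alg.D ^ i) g))) ∧
  -- intersection: w = \bar f_(m) c = a_(n) \bar g, |\bar f| + |\bar g| > |w|
  (∀ f ∈ S, ∀ g ∈ S, ∀ fw gw : NormalWord B N,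
    IsLead bas r f fw → IsLead bas r g gw → fw.exp = 0 →
    ∀ (p : List (B × Fin N)) (m : Fin N) (c : NormalWord B N),
      fw.body ++ (fw.last, m) :: c.body = p ++ gw.body →
      c.last = gw.last → c.exp = gw.exp →
      p.length < fw.body.length + 1 →
      TrivialMod F bas r S (F.alg.mul (m : ℕ) f (evalWord F c) - evalAux F p g)) ∧
  -- right intersection: w = \bar f D^i = a_(n) \bar g, i > 0
  (∀ f ∈ S, ∀ g ∈ S, ∀ fw gw : NormalWord B N,
    IsLead bas r f fw → IsLead bas r g gw →
    ∀ (p : List (B × Fin N)) (i : ℕ), 0 < i →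
      fw.body = p ++ gw.body → fw.last = gw.last → fw.exp + i = gw.exp →
      TrivialMod F bas r S ((F.alg.D ^ i) f - evalAux F p g)) ∧
  LeftMultClosed F bas r S ∧ RightMultClosed F bas r S
where sw₁ (p : List (B × Fin N)) (gw : NormalWord B N) (m : Fin N) (c : NormalWord B N) :
    List (B × Fin N) := gw.body ++ (gw.last, m) :: c.body

/-- The set of `S`-irreducible normal words. -/
def Irr (F : FreeAssocConformal K B N C) (bas : Module.Basis (NormalWord B N) K C)
    (r : B → B → Prop) (S : Set C) : Set (NormalWord B N) :=
  {w | ¬ ∃ g : C, IsNSWord F bas r S g w}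

/-- Membership in the (conformal) ideal generated by `S`. -/
inductive InIdeal (F : FreeAssocConformal K B N C) (S : Set C) : C → Prop
  | mem {s : C} : s ∈ S → InIdeal F S s
  | zero : InIdeal F S 0
  | add {x y : C} : InIdeal F S x → InIdeal F S y → InIdeal F S (x + y)
  | smul (a : K) {x : C} : InIdeal F S x → InIdeal F S (a • x)
  | deriv {x : C} : InIdeal F S x → InIdeal F S (F.alg.D x)
  | mul_left (n : ℕ) (y : C) {x : C} : InIdeal F S x → InIdeal F S (F.alg.mul n y x)
  | mul_right (n : ℕ) (y : C) {x : C} : InIdeal F S x → InIdeal F S (F.alg.mul n x y)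

/-- The ideal generated by `S`, as a submodule. -/
def idealOf (F : FreeAssocConformal K B N C) (S : Set C) : Submodule K C where
  carrier := {x | InIdeal F S x}
  add_mem' := fun hx hy => InIdeal.add hx hy
  zero_mem' := InIdeal.zero
  smul_mem' := fun a _ hx => InIdeal.smul a hx

/-- `S`-words: words containing exactly one occurrence of some `D^i s`, `s ∈ S`. -/
inductive IsSWord (F : FreeAssocConformal K B N C) (S : Set C) : C → Prop
  | base {s : C} (hs : s ∈ S) (i : ℕ) : IsSWord F S ((F.alg.D ^ i) s)
  | mul_right {u : C} (hu : IsSWord F S u) (v : CWord B) (m : ℕ) :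
      IsSWord F S (F.alg.mul m u (evalCWord F v))
  | mul_left {u : C} (hu : IsSWord F S u) (v : CWord B) (m : ℕ) :
      IsSWord F S (F.alg.mul m (evalCWord F v) u)

/-- A reduced set: every monomial of each `s ∈ S` is `(S∖{s})`-irreducible. -/
def IsReducedSet (F : FreeAssocConformal K B N C) (bas : Module.Basis (NormalWord B N) K C)
    (r : B → B → Prop) (S : Set C) : Prop :=
  ∀ s ∈ S, ∀ w, bas.repr s w ≠ 0 → w ∈ Irr F bas r (S \ {s})

/-!
The bound is carried by the span of the normal words of weight at most a given word.
Associativity expands `(a_(q) x)_(n) y` into the words `a_(q-t)(x_(n+t) y)`, which reduces the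
claim to `u = D^i b`, and `(D a)_(n) = -n a_(n-1)` removes `D^i`. For a generator acting on `[v]`,
inverting associativity writes `b_(n)(c_(p) x)` through the `(b_(s) c)_(q) x`, which vanish for
`s ≥ N` by locality, and the Leibniz rule handles the final power of `D`. Every junction index
produced is at most `N - 1`, the index that `♮` puts there.
-/

namespace NormalWord

variable {B : Type v} {N : ℕ}

def cons (p : B × Fin N) (w : NormalWord B N) : NormalWord B N := ⟨p :: w.body, w.last, w.exp⟩

def maxIndex (hN : 0 < N) : Fin N := ⟨N - 1, Nat.sub_lt hN one_pos⟩

theorem le_maxIndex (hN : 0 < N) (m : Fin N) : m ≤ maxIndex hN :=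
  Nat.le_sub_one_of_lt m.2

end NormalWord

open NormalWord

section WeightOrder

variable {B : Type v} {N : ℕ} {r : B → B → Prop}

theorem wtLT_iff_lex {u v : NormalWord B N} :
    wtLT r u v ↔
      Prod.Lex (· < ·) (Prod.Lex (List.Lex (Prod.Lex r (· < ·))) (Prod.Lex r (· < ·)))
        (u.body.length, u.body, u.last, u.exp) (v.body.length, v.body, v.last, v.exp) := by
  simp only [wtLT, Prod.lex_def]

theorem wtLT_trans [IsTrans B r] {u v w : NormalWord B N}
    (huv : wtLT r u v) (hvw : wtLT r v w) : wtLT r u w := by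
  have : IsTrans (List (B × Fin N)) (List.Lex (Prod.Lex r (· < ·))) :=
    ⟨fun _ _ _ => List.lex_trans _root_.trans⟩
  rw [wtLT_iff_lex] at *
  exact _root_.trans huv hvw

theorem wtLE_rfl {u : NormalWord B N} : wtLE r u u := Or.inr rfl

theorem wtLE_trans [IsTrans B r] {u v w : NormalWord B N}
    (huv : wtLE r u v) (hvw : wtLE r v w) : wtLE r u w := by
  rcases huv with huv | rfl
  · rcases hvw with hvw | rfl
    · exact Or.inl (wtLT_trans huv hvw)
    · exact Or.inl huv
  · exact hvw

theorem wtLE_cons {c : B} {m m' : Fin N} (hm : m ≤ m') {w w' : NormalWord B N}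
    (h : wtLE r w w') : wtLE r (w.cons (c, m)) (w'.cons (c, m')) := by
  rcases h with h | rfl
  · left
    rcases h with h | ⟨hlen, h⟩
    · exact Or.inl (Nat.succ_lt_succ h)
    refine Or.inr ⟨congrArg (· + 1) hlen, ?_⟩
    rcases hm.lt_or_eq with hm | rfl
    · exact Or.inl (List.Lex.rel (Prod.Lex.right c hm))
    rcases h with hlex | ⟨hbody, hrest⟩
    · exact Or.inl (List.Lex.cons hlex)
    · exact Or.inr ⟨congrArg (List.cons (c, m)) hbody, hrest⟩
  · rcases hm.lt_or_eq with hm | rfl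
    · exact Or.inl (Or.inr ⟨rfl, Or.inl (List.Lex.rel (Prod.Lex.right c hm))⟩)
    · exact wtLE_rfl

theorem wtLE_shiftD {w w' : NormalWord B N} (h : wtLE r w w') (i : ℕ) :
    wtLE r (w.shiftD i) (w'.shiftD i) := by
  rcases h with h | rfl
  · rcases h with h | ⟨hlen, hlex | ⟨hbody, hlast | ⟨hlast, hexp⟩⟩⟩
    · exact Or.inl (Or.inl h)
    · exact Or.inl (Or.inr ⟨hlen, Or.inl hlex⟩)
    · exact Or.inl (Or.inr ⟨hlen, Or.inr ⟨hbody, Or.inl hlast⟩⟩)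
    · exact Or.inl (Or.inr ⟨hlen, Or.inr ⟨hbody, Or.inr
        ⟨hlast, Nat.add_lt_add_right hexp i⟩⟩⟩)
  · exact wtLE_rfl

theorem wtLE_of_exp_le {body : List (B × Fin N)} {l : B} {e e' : ℕ} (h : e ≤ e') :
    wtLE r (⟨body, l, e⟩ : NormalWord B N) ⟨body, l, e'⟩ := by
  rcases h.lt_or_eq with h | rfl
  · exact Or.inl (Or.inr ⟨rfl, Or.inr ⟨rfl, Or.inr ⟨rfl, h⟩⟩⟩)
  · exact wtLE_rfl

end WeightOrder

namespace AssocConformalAlgebra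

variable {K : Type u} [Field K] {C : Type w} [AddCommGroup C] [Module K C]
  (A : AssocConformalAlgebra K C)

theorem mul_D_right (n : ℕ) (x y : C) :
    A.mul n x (A.D y) = A.D (A.mul n x y) - A.mul n (A.D x) y := by
  rw [A.leibniz]
  abel

theorem mul_D_left_mem {p : Submodule K C} {x y : C} {n : ℕ}
    (h : n ≠ 0 → A.mul (n - 1) x y ∈ p) : A.mul n (A.D x) y ∈ p := by
  cases n with
  | zero => simpa only [A.D_mul_zero] using p.zero_mem
  | succ n =>
    rw [A.D_mul _ _ _ n.succ_pos]
    exact neg_mem (p.smul_mem _ (h n.succ_ne_zero))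

theorem mul_D_pow_left_mem {p : Submodule K C} {x y : C} (h : ∀ m, A.mul m x y ∈ p)
    (i n : ℕ) : A.mul n ((A.D ^ i) x) y ∈ p := by
  induction i generalizing n with
  | zero => exact h n
  | succ i ih =>
    rw [pow_succ', Module.End.mul_apply]
    exact A.mul_D_left_mem fun _ => ih _

/-- Associativity solved for `a_(n)(b_(m) c)`: its `t = 0` term is `(a_(n) b)_(m) c`, and the
other terms have a smaller outer index, so induction on `n` applies. -/
theorem mul_mul_mem_span (a b c : C) (n m : ℕ) :
    A.mul n a (A.mul m b c) ∈
      Submodule.span K {x | ∃ s ≤ n, ∃ q, x = A.mul q (A.mul s a b) c} := by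
  induction n using Nat.strong_induction_on generalizing m with
  | _ n ih =>
    have hassoc := A.assoc n m a b c
    rw [Finset.sum_range_succ'] at hassoc
    simp only [pow_zero, one_mul, Nat.choose_zero_right, Nat.cast_one, one_smul,
      Nat.sub_zero, Nat.add_zero] at hassoc
    rw [eq_sub_of_add_eq' hassoc.symm]
    refine Submodule.sub_mem _ (Submodule.subset_span ⟨n, le_rfl, m, rfl⟩)
      (Submodule.sum_mem _ fun t ht => Submodule.smul_mem _ _ ?_)
    have ht : t < n := Finset.mem_range.1 ht
    refine Submodule.span_mono ?_ (ih (n - (t + 1)) (by omega) (m + (t + 1)))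
    rintro x ⟨s, hs, q, rfl⟩
    exact ⟨s, hs.trans (Nat.sub_le _ _), q, rfl⟩

end AssocConformalAlgebra

section SpanBelow

variable {K : Type u} [Field K] {B : Type v} {N : ℕ} {C : Type w} [AddCommGroup C] [Module K C]
  (bas : Module.Basis (NormalWord B N) K C) (r : B → B → Prop)

def spanBelow (W : NormalWord B N) : Submodule K C :=
  Submodule.span K (bas '' {w | wtLE r w W})

variable {bas r}

theorem mem_spanBelow {W : NormalWord B N} {x : C} :
    x ∈ spanBelow bas r W ↔ ∀ w, bas.repr x w ≠ 0 → wtLE r w W := by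
  rw [spanBelow, bas.mem_span_image]
  exact ⟨fun h w hw => h (Finsupp.mem_support_iff.2 hw), fun h w hw => h w (by simpa using hw)⟩

theorem basis_mem_spanBelow {w W : NormalWord B N} (h : wtLE r w W) :
    bas w ∈ spanBelow bas r W :=
  Submodule.subset_span ⟨w, h, rfl⟩

theorem spanBelow_mono [IsTrans B r] {W W' : NormalWord B N} (h : wtLE r W W') :
    spanBelow bas r W ≤ spanBelow bas r W' :=
  Submodule.span_mono (Set.image_mono fun _ hw => wtLE_trans hw h)

theorem map_mem_spanBelow {W W' : NormalWord B N} (T : C →ₗ[K] C)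
    (hT : ∀ w, wtLE r w W → T (bas w) ∈ spanBelow bas r W') {x : C}
    (hx : x ∈ spanBelow bas r W) : T x ∈ spanBelow bas r W' :=
  (Submodule.span_le (p := (spanBelow bas r W').comap T)).2
    (Set.image_subset_iff.2 hT) hx

end SpanBelow

namespace FreeAssocConformal

variable {K : Type u} [Field K] {B : Type v} {N : ℕ} {C : Type w} [AddCommGroup C] [Module K C]
  (F : FreeAssocConformal K B N C) {bas : Module.Basis (NormalWord B N) K C}
  (hbas : ∀ w, bas w = evalWord F w) {r : B → B → Prop}

include hbas

theorem basis_letter (l : B) (e : ℕ) : bas ⟨[], l, e⟩ = (F.alg.D ^ e) (F.ι l) := by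
  rw [hbas]
  rfl

theorem basis_cons (p : B × Fin N) (w : NormalWord B N) :
    bas (w.cons p) = F.alg.mul p.2 (F.ι p.1) (bas w) := by
  rw [hbas, hbas]
  rfl

theorem mul_ι_mem_spanBelow [IsTrans B r] (c : B) (m : Fin N) {W : NormalWord B N} {x : C}
    (hx : x ∈ spanBelow bas r W) :
    F.alg.mul m (F.ι c) x ∈ spanBelow bas r (W.cons (c, m)) := by
  refine map_mem_spanBelow _ (fun w hw => ?_) hx
  rw [← F.basis_cons hbas (c, m)]
  exact basis_mem_spanBelow (wtLE_cons le_rfl hw)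

/-- The derivation lowers a junction index, `D (c_(p) x) = -p c_(p-1) x + c_(p)(D x)`, or raises
the final exponent. -/
theorem D_basis_mem_spanBelow [IsTrans B r] (w : NormalWord B N) :
    F.alg.D (bas w) ∈ spanBelow bas r (w.shiftD 1) := by
  obtain ⟨body, l, e⟩ := w
  induction body with
  | nil =>
    rw [F.basis_letter hbas, ← Module.End.mul_apply, ← pow_succ', ← F.basis_letter hbas]
    exact basis_mem_spanBelow wtLE_rfl
  | cons p body ih =>
    obtain ⟨c, q⟩ := p
    change F.alg.D (bas (NormalWord.cons (c, q) ⟨body, l, e⟩)) ∈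
      spanBelow bas r (NormalWord.cons (c, q) ⟨body, l, e + 1⟩)
    rw [F.basis_cons hbas, F.alg.leibniz]
    refine Submodule.add_mem _ (F.alg.mul_D_left_mem fun hq => ?_)
      (F.mul_ι_mem_spanBelow hbas c q ih)
    have hq' : (q : ℕ) - 1 < q := Nat.sub_lt (Nat.pos_of_ne_zero hq) one_pos
    rw [← F.basis_cons hbas (c, ⟨q - 1, hq'.trans q.2⟩)]
    exact basis_mem_spanBelow
      (Or.inl (Or.inr ⟨rfl, Or.inl (List.Lex.rel (Prod.Lex.right c hq'))⟩))

theorem D_mem_spanBelow [IsTrans B r] {W : NormalWord B N} {x : C}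
    (hx : x ∈ spanBelow bas r W) : F.alg.D x ∈ spanBelow bas r (W.shiftD 1) :=
  map_mem_spanBelow _ (fun w hw =>
    spanBelow_mono (wtLE_shiftD hw 1) (F.D_basis_mem_spanBelow hbas w)) hx

theorem mul_mul_ι_mem_spanBelow [IsTrans B r] (a : B) (s : Fin N) {x y : C}
    {W : NormalWord B N} (h : ∀ m, F.alg.mul m x y ∈ spanBelow bas r W) (n : ℕ) :
    F.alg.mul n (F.alg.mul s (F.ι a) x) y ∈ spanBelow bas r (W.cons (a, s)) := by
  rw [F.alg.assoc]
  refine Submodule.sum_mem _ fun t _ => Submodule.smul_mem _ _ ?_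
  have hst : (s : ℕ) - t < N := (Nat.sub_le _ _).trans_lt s.2
  exact spanBelow_mono (wtLE_cons (Fin.mk_le_of_le_val (Nat.sub_le _ _)) wtLE_rfl)
    (F.mul_ι_mem_spanBelow hbas a ⟨s - t, hst⟩ (h (n + t)))

theorem mul_ι_letter_mem_spanBelow [IsTrans B r] (hN : 0 < N) (b l : B) (e n : ℕ) :
    F.alg.mul n (F.ι b) (bas ⟨[], l, e⟩) ∈
      spanBelow bas r ((⟨[], b, 0⟩ : NormalWord B N).natMul ⟨[], l, e⟩ hN) := by
  induction e generalizing n with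
  | zero =>
    by_cases hn : n < N
    · rw [show n = ((⟨n, hn⟩ : Fin N) : ℕ) from rfl, ← F.basis_cons hbas (b, ⟨n, hn⟩)]
      exact basis_mem_spanBelow (wtLE_cons (le_maxIndex hN _) wtLE_rfl)
    · rw [F.basis_letter hbas, pow_zero, Module.End.one_apply, F.loc b l n (not_lt.1 hn)]
      exact Submodule.zero_mem _
  | succ e ih =>
    rw [F.basis_letter hbas, pow_succ', Module.End.mul_apply, ← F.basis_letter hbas,
      F.alg.mul_D_right]
    refine Submodule.sub_mem _ (F.D_mem_spanBelow hbas (ih n) :) (F.alg.mul_D_left_mem fun _ => ?_)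
    exact spanBelow_mono (wtLE_of_exp_le e.le_succ) (ih _)

theorem mul_ι_mem_spanBelow_natMul [IsTrans B r] (hN : 0 < N) (b : B) (v : NormalWord B N)
    (n : ℕ) :
    F.alg.mul n (F.ι b) (bas v) ∈
      spanBelow bas r ((⟨[], b, 0⟩ : NormalWord B N).natMul v hN) := by
  obtain ⟨body, l, e⟩ := v
  induction body generalizing b n with
  | nil => exact F.mul_ι_letter_mem_spanBelow hbas hN b l e n
  | cons p body ih =>
    obtain ⟨c, q⟩ := p
    change F.alg.mul n (F.ι b) (bas (NormalWord.cons (c, q) ⟨body, l, e⟩)) ∈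
      spanBelow bas r (((⟨[], c, 0⟩ : NormalWord B N).natMul ⟨body, l, e⟩ hN).cons
        (b, maxIndex hN))
    rw [F.basis_cons hbas]
    refine Submodule.span_le.2 ?_ (F.alg.mul_mul_mem_span _ _ _ n q)
    rintro x ⟨s, -, k, rfl⟩
    by_cases hs : s < N
    · exact spanBelow_mono (wtLE_cons (le_maxIndex hN ⟨s, hs⟩) wtLE_rfl)
        (F.mul_mul_ι_mem_spanBelow hbas b ⟨s, hs⟩ (fun m => ih c m) k)
    · rw [F.loc b c s (not_lt.1 hs), map_zero, LinearMap.zero_apply]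
      exact Submodule.zero_mem _

theorem mul_basis_mem_spanBelow_natMul [IsTrans B r] (hN : 0 < N) (u v : NormalWord B N)
    (n : ℕ) : F.alg.mul n (bas u) (bas v) ∈ spanBelow bas r (u.natMul v hN) := by
  obtain ⟨body, l, e⟩ := u
  induction body generalizing n with
  | nil =>
    rw [F.basis_letter hbas]
    exact F.alg.mul_D_pow_left_mem (F.mul_ι_mem_spanBelow_natMul hbas hN l v) e n
  | cons p body ih =>
    change F.alg.mul n (bas (NormalWord.cons p ⟨body, l, e⟩)) (bas v) ∈
      spanBelow bas r ((NormalWord.natMul ⟨body, l, e⟩ v hN).cons p)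
    rw [F.basis_cons hbas]
    exact F.mul_mul_ι_mem_spanBelow hbas p.1 p.2 ih n

end FreeAssocConformal

theorem lead_mul_le_natMul_general {K : Type u} [Field K]
    {B : Type v} {N : ℕ} {C : Type w} [AddCommGroup C] [Module K C]
    (F : FreeAssocConformal K B N C) (bas : Module.Basis (NormalWord B N) K C)
    (hbas : ∀ w, bas w = evalWord F w)
    (r : B → B → Prop) (hr : IsWellOrder B r) (hN : 0 < N)
    (u v : NormalWord B N) (n : ℕ) (w : NormalWord B N)
    (hw : IsLead bas r (F.alg.mul n (evalWord F u) (evalWord F v)) w) :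
    wtLE r w (u.natMul v hN) := by
  rw [← hbas, ← hbas] at hw
  exact mem_spanBelow.1 (F.mul_basis_mem_spanBelow_natMul hbas (r := r) hN u v n) w hw.1

theorem lead_mul_le_natMul {K : Type u} [Field K] [CharZero K]
    {B : Type v} {N : ℕ} {C : Type w} [AddCommGroup C] [Module K C]
    (F : FreeAssocConformal K B N C) (bas : Module.Basis (NormalWord B N) K C)
    (hbas : ∀ w, bas w = evalWord F w)
    (r : B → B → Prop) (hr : IsWellOrder B r) (hN : 0 < N)
    (u v : NormalWord B N) (n : ℕ) (w : NormalWord B N)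
    (hw : IsLead bas r (F.alg.mul n (evalWord F u) (evalWord F v)) w) :
    wtLE r w (u.natMul v hN) :=
  lead_mul_le_natMul_general F bas hbas r hr hN u v n w hw
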